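/- If G is a graph of order n with minimum hop degree δ_h ≥ 1, then γ_{rh}(G) ≤ 2n·(ln(δ_h + 1) + 1)/(δ_h + 1). -/

import Mathlib

open Finset

noncomputable section
open scoped Classical

variable {n : ℕ}

/-- The set of vertices at distance exactly 2 from `i`. -/
def N2 (G : SimpleGraph (Fin n)) (i : Fin n) : Finset (Fin n) :=
  Finset.univ.filter (fun j => G.dist i j = 2)

/-- The neighborhood of `i`. -/
def Nbr (G : SimpleGraph (Fin n)) (i : Fin n) : Finset (Fin n) :=
  Finset.univ.filter (fun j => G.Adj i j)

/-- Hop degree of a vertex. -/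
def hopDeg (G : SimpleGraph (Fin n)) (i : Fin n) : ℕ := (N2 G i).card

/-- Minimum hop degree. -/
def minHopDeg (G : SimpleGraph (Fin n)) : ℕ := ⨅ i, hopDeg G i

/-- Minimum degree. -/
def minDeg (G : SimpleGraph (Fin n)) : ℕ := ⨅ i, (Nbr G i).card

def IsHopDomSet (G : SimpleGraph (Fin n)) (S : Finset (Fin n)) : Prop :=
  ∀ u, u ∉ S → ∃ v ∈ S, G.dist u v = 2

def IsTwoStepDomSet (G : SimpleGraph (Fin n)) (S : Finset (Fin n)) : Prop :=
  ∀ u : Fin n, ∃ v ∈ S, G.dist u v = 2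

def IsRestrainedHopDomSet (G : SimpleGraph (Fin n)) (S : Finset (Fin n)) : Prop :=
  IsHopDomSet G S ∧ ∀ u, u ∉ S → ∃ v, v ∉ S ∧ G.Adj u v

def IsTotalRestrainedHopDomSet (G : SimpleGraph (Fin n)) (S : Finset (Fin n)) : Prop :=
  IsTwoStepDomSet G S ∧ ∀ u, u ∉ S → ∃ v, v ∉ S ∧ G.Adj u v

def IsTwoStepRestrainedDomSet (G : SimpleGraph (Fin n)) (S : Finset (Fin n)) : Prop :=
  IsHopDomSet G S ∧ ∀ u, u ∉ S → ∃ v, v ∉ S ∧ G.dist u v = 2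

def IsTotalTwoStepRestrainedDomSet (G : SimpleGraph (Fin n)) (S : Finset (Fin n)) : Prop :=
  IsTwoStepDomSet G S ∧ ∀ u, u ∉ S → ∃ v, v ∉ S ∧ G.dist u v = 2

def hopDomNum (G : SimpleGraph (Fin n)) : ℕ :=
  sInf {k | ∃ S : Finset (Fin n), IsHopDomSet G S ∧ S.card = k}

def twoStepDomNum (G : SimpleGraph (Fin n)) : ℕ :=
  sInf {k | ∃ S : Finset (Fin n), IsTwoStepDomSet G S ∧ S.card = k}

def rhDomNum (G : SimpleGraph (Fin n)) : ℕ :=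
  sInf {k | ∃ S : Finset (Fin n), IsRestrainedHopDomSet G S ∧ S.card = k}

def trhDomNum (G : SimpleGraph (Fin n)) : ℕ :=
  sInf {k | ∃ S : Finset (Fin n), IsTotalRestrainedHopDomSet G S ∧ S.card = k}

def tsrDomNum (G : SimpleGraph (Fin n)) : ℕ :=
  sInf {k | ∃ S : Finset (Fin n), IsTwoStepRestrainedDomSet G S ∧ S.card = k}

def ttsrDomNum (G : SimpleGraph (Fin n)) : ℕ :=
  sInf {k | ∃ S : Finset (Fin n), IsTotalTwoStepRestrainedDomSet G S ∧ S.card = k}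

/-- The graph `Dist(G;2)` joining vertices at distance exactly 2 in `G`. -/
def dist2Graph (G : SimpleGraph (Fin n)) : SimpleGraph (Fin n) where
  Adj u v := u ≠ v ∧ G.dist u v = 2
  symm := by
    constructor
    intro u v h
    exact ⟨h.1.symm, by rw [SimpleGraph.dist_comm]; exact h.2⟩
  loopless := ⟨fun v h => h.1 rfl⟩

def domNum (H : SimpleGraph (Fin n)) : ℕ :=
  sInf {k | ∃ S : Finset (Fin n), (∀ u, u ∉ S → ∃ v ∈ S, H.Adj u v) ∧ S.card = k}

def totalDomNum (H : SimpleGraph (Fin n)) : ℕ :=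
  sInf {k | ∃ S : Finset (Fin n), (∀ u : Fin n, ∃ v ∈ S, H.Adj u v) ∧ S.card = k}

/-- Matching number: maximum number of edges in a matching. -/
def matchingNum (G : SimpleGraph (Fin n)) : ℕ :=
  sSup {k | ∃ M : SimpleGraph.Subgraph G, M.IsMatching ∧ M.edgeSet.ncard = k}

/-- A hop matching: a set of paths of length two, no two of which share an end vertex. -/
def IsHopMatching (G : SimpleGraph (Fin n)) (H : Finset (Fin n × Fin n × Fin n)) : Prop :=
  (∀ t ∈ H, G.Adj t.1 t.2.1 ∧ G.Adj t.2.1 t.2.2 ∧ t.1 ≠ t.2.2) ∧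
  ∀ t ∈ H, ∀ t' ∈ H, t ≠ t' →
    t.1 ≠ t'.1 ∧ t.1 ≠ t'.2.2 ∧ t.2.2 ≠ t'.1 ∧ t.2.2 ≠ t'.2.2

/-- Hop matching number. -/
def hopMatchingNum (G : SimpleGraph (Fin n)) : ℕ :=
  sSup {k | ∃ H : Finset (Fin n × Fin n × Fin n), IsHopMatching G H ∧ H.card = k}

def frh (G : SimpleGraph (Fin n)) (p : Fin n → ℝ) : ℝ :=
  (∑ i, p i) + (∑ i, (1 - p i) * ∏ j ∈ N2 G i, (1 - p j)) +
  ∑ i, (1 - p i) * (1 - (1 - p i) * ∏ j ∈ N2 G i, (1 - p j)) *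
    ∏ j ∈ Nbr G i, (p j + (1 - p j) * ∏ k ∈ N2 G j, (1 - p k))

def f2sr (G : SimpleGraph (Fin n)) (p : Fin n → ℝ) : ℝ :=
  (∑ i, p i) + (∑ i, (1 - p i) * ∏ j ∈ N2 G i, (1 - p j)) +
  ∑ i, (1 - p i) * (1 - (1 - p i) * ∏ j ∈ N2 G i, (1 - p j)) *
    ∏ j ∈ N2 G i, (p j + (1 - p j) * ∏ k ∈ N2 G j, (1 - p k))

def ZSet (G : SimpleGraph (Fin n)) (X : Finset (Fin n)) : Finset (Fin n) :=
  Finset.univ.filter (fun i => i ∉ X ∧ N2 G i ∩ X = ∅)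

def YSet (G : SimpleGraph (Fin n)) (X : Finset (Fin n)) : Finset (Fin n) :=
  Finset.univ.filter (fun i => i ∉ X ∪ ZSet G X ∧ Nbr G i ⊆ X ∪ ZSet G X)

def DSet (G : SimpleGraph (Fin n)) (X : Finset (Fin n)) : Finset (Fin n) :=
  X ∪ ZSet G X ∪ YSet G X

/-!
Put every vertex into a random set `X` independently with probability
`p = ln(δ_h + 1) / (δ_h + 1)`. Adding the set `Z` of vertices outside `X` with no hop neighbour in
`X`, and then the set `Y` of remaining vertices all of whose neighbours lie in `X ∪ Z`, gives a
restrained hop dominating set `X ∪ Z ∪ Y`. A vertex lies in `Z` with probability at most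
`(1 - p)^(δ_h + 1)`; as `δ_h ≥ 1`, every vertex `i` has a neighbour `j`, and `i ∈ Y` forces
`j ∈ X ∪ Z`. Hence the expected size is at most `2n (p + (1 - p)^(δ_h + 1))`, and
`(1 - p)^(δ_h + 1) ≤ e^(-p (δ_h + 1)) = 1 / (δ_h + 1)`.
-/

section BernoulliSubset

variable {α : Type*} [Fintype α] {p : ℝ}

/-- The probability of drawing `X` when every element is put in independently with probability
`p`. -/
def bernoulliWeight (p : ℝ) (X : Finset α) : ℝ := p ^ #X * (1 - p) ^ #Xᶜ

def bernoulliProb (p : ℝ) (E : Finset α → Prop) : ℝ := ∑ X with E X, bernoulliWeight p X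

lemma bernoulliWeight_nonneg (hp₀ : 0 ≤ p) (hp₁ : p ≤ 1) (X : Finset α) :
    0 ≤ bernoulliWeight p X :=
  mul_nonneg (pow_nonneg hp₀ _) (pow_nonneg (sub_nonneg.2 hp₁) _)

theorem bernoulliProb_subset_and_disjoint {A B : Finset α} (hAB : Disjoint A B) :
    bernoulliProb p (fun X => A ⊆ X ∧ Disjoint X B) = p ^ #A * (1 - p) ^ #B := by
  have hsplit : ∀ i, (if i ∉ B then p else 0) + (if i ∉ A then 1 - p else 0) =
      (if i ∈ A then p else 1) * (if i ∈ B then 1 - p else 1) := by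
    intro i
    by_cases hA : i ∈ A
    · simp [hA, Finset.disjoint_left.1 hAB hA]
    · by_cases hB : i ∈ B <;> simp [hA, hB]
  -- In the expansion of `∏ i, (f i + g i)` over subsets `X`, the term of `X` is its weight if
  -- `A ⊆ X` and `Disjoint X B`, and `0` otherwise.
  have key := prod_add (fun i => if i ∉ B then p else 0) (fun i => if i ∉ A then 1 - p else 0) univ
  simp only [hsplit, prod_mul_distrib, prod_ite_mem, univ_inter, prod_const, powerset_univ,
    ← compl_eq_univ_sdiff, prod_ite_zero, ite_zero_mul_ite_zero] at key
  rw [key, bernoulliProb, sum_filter]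
  simp only [bernoulliWeight, ← Finset.disjoint_left, mem_compl, not_imp_not, and_comm, subset_iff]

lemma bernoulliProb_mem (a : α) : bernoulliProb p (a ∈ ·) = p := by
  simpa using bernoulliProb_subset_and_disjoint (p := p) (disjoint_empty_right {a})

lemma bernoulliProb_disjoint (B : Finset α) : bernoulliProb p (Disjoint · B) = (1 - p) ^ #B := by
  simpa using bernoulliProb_subset_and_disjoint (p := p) (disjoint_empty_left B)

lemma sum_bernoulliWeight : ∑ X : Finset α, bernoulliWeight p X = 1 := by
  simpa [bernoulliProb] using bernoulliProb_disjoint (α := α) (p := p) ∅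

lemma bernoulliProb_mono (hp₀ : 0 ≤ p) (hp₁ : p ≤ 1) {E F : Finset α → Prop}
    (h : ∀ X, E X → F X) : bernoulliProb p E ≤ bernoulliProb p F :=
  sum_le_sum_of_subset_of_nonneg (monotone_filter_right _ fun X _ => h X)
    fun X _ _ => bernoulliWeight_nonneg hp₀ hp₁ X

lemma bernoulliProb_or_le (hp₀ : 0 ≤ p) (hp₁ : p ≤ 1) (E F : Finset α → Prop) :
    bernoulliProb p (fun X => E X ∨ F X) ≤ bernoulliProb p E + bernoulliProb p F := by
  rw [bernoulliProb, bernoulliProb, bernoulliProb, ← sum_union_inter, ← filter_or]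
  exact (le_add_of_nonneg_right (sum_nonneg fun X _ => bernoulliWeight_nonneg hp₀ hp₁ X)).trans_eq'
    (by congr! 2)

theorem cast_le_sum_bernoulliProb_mem (hp₀ : 0 ≤ p) (hp₁ : p ≤ 1) {β : Type*} [Fintype β]
    (S : Finset α → Finset β) {c : ℕ} (hc : ∀ X, c ≤ #(S X)) :
    (c : ℝ) ≤ ∑ b, bernoulliProb p (b ∈ S ·) := by
  calc (c : ℝ) = ∑ X, bernoulliWeight p X * c := by
        rw [← sum_mul, sum_bernoulliWeight (α := α), one_mul]
    _ ≤ ∑ X, bernoulliWeight p X * #(S X) := by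
      gcongr with X
      · exact bernoulliWeight_nonneg hp₀ hp₁ X
      · exact hc X
    _ = ∑ X, ∑ b, if b ∈ S X then bernoulliWeight p X else 0 := by
      refine sum_congr rfl fun X _ => ?_
      rw [sum_ite_mem, univ_inter, sum_const, nsmul_eq_mul, mul_comm]
    _ = ∑ b, bernoulliProb p (b ∈ S ·) := by
      rw [sum_comm]
      simp only [bernoulliProb, sum_filter]

end BernoulliSubset

lemma one_sub_log_div_pow_le_inv {k : ℕ} (hk : 0 < k) :
    (1 - Real.log k / k) ^ k ≤ (k : ℝ)⁻¹ := by
  have hk' : (0 : ℝ) < k := Nat.cast_pos.2 hk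
  calc (1 - Real.log k / k) ^ k ≤ Real.exp (-Real.log k) :=
        Real.one_sub_div_pow_le_exp_neg (Real.log_le_self hk'.le)
    _ = (k : ℝ)⁻¹ := by rw [Real.exp_neg, Real.exp_log hk']

lemma SimpleGraph.Reachable.exists_adj {V : Type*} {G : SimpleGraph V} {u v : V}
    (h : G.Reachable u v) (hne : u ≠ v) : ∃ w, G.Adj u w := by
  obtain ⟨walk⟩ := h
  cases walk with
  | nil => exact absurd rfl hne
  | cons hadj _ => exact ⟨_, hadj⟩

section RandomRestrainedHopDomSet

variable (G : SimpleGraph (Fin n))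

lemma minHopDeg_le_hopDeg (i : Fin n) : minHopDeg G ≤ hopDeg G i :=
  ciInf_le (OrderBot.bddBelow _) i

lemma exists_adj_of_one_le_minHopDeg (h : 1 ≤ minHopDeg G) (i : Fin n) : ∃ j, G.Adj i j := by
  obtain ⟨k, hk⟩ := card_pos.1 (h.trans (minHopDeg_le_hopDeg G i))
  have hdist : G.dist i k ≠ 0 := by simp_all [N2]
  obtain ⟨hne, hreach⟩ := SimpleGraph.dist_ne_zero_iff_ne_and_reachable.1 hdist
  exact hreach.exists_adj hne

lemma card_insert_N2 (i : Fin n) : #(insert i (N2 G i)) = hopDeg G i + 1 :=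
  card_insert_of_notMem (by simp [N2])

lemma isRestrainedHopDomSet_DSet (X : Finset (Fin n)) : IsRestrainedHopDomSet G (DSet G X) := by
  constructor
  · intro u hu
    have hZ : u ∉ ZSet G X := fun h => hu (by simp [DSet, h])
    obtain ⟨v, hv⟩ : (N2 G u ∩ X).Nonempty := by
      rw [nonempty_iff_ne_empty]
      exact fun h => hZ (by simp_all [ZSet, DSet])
    exact ⟨v, by simp_all [DSet], by simp_all [N2]⟩
  · intro u hu
    have hY : ¬ Nbr G u ⊆ X ∪ ZSet G X := fun h => hu (by simp_all [DSet, YSet])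
    obtain ⟨v, hv, hvXZ⟩ := not_subset.1 hY
    have hadj : G.Adj u v := by simpa [Nbr] using hv
    refine ⟨v, fun hvD => ?_, hadj⟩
    have hvY : v ∈ YSet G X := by simp_all [DSet]
    have huXZ : u ∈ X ∪ ZSet G X := (mem_filter.1 hvY).2.2 (by simpa [Nbr] using hadj.symm)
    exact hu (by simp_all [DSet])

lemma rhDomNum_le_card {S : Finset (Fin n)} (hS : IsRestrainedHopDomSet G S) : rhDomNum G ≤ #S :=
  Nat.sInf_le ⟨S, hS, rfl⟩

lemma disjoint_insert_N2_of_mem_ZSet {X : Finset (Fin n)} {i : Fin n} (h : i ∈ ZSet G X) :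
    Disjoint X (insert i (N2 G i)) := by
  simp only [ZSet, mem_filter, ← disjoint_iff_inter_eq_empty] at h
  exact disjoint_insert_right.2 ⟨h.2.1, h.2.2.symm⟩

lemma mem_or_mem_ZSet_of_mem_YSet {X : Finset (Fin n)} {i j : Fin n} (hij : G.Adj i j)
    (h : i ∈ YSet G X) : j ∈ X ∨ j ∈ ZSet G X := by
  simp only [YSet, mem_filter] at h
  simpa using h.2.2 (by simpa [Nbr] using hij)

variable {p : ℝ}

lemma bernoulliProb_mem_ZSet_le (hp₀ : 0 ≤ p) (hp₁ : p ≤ 1) (i : Fin n) :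
    bernoulliProb p (i ∈ ZSet G ·) ≤ (1 - p) ^ (minHopDeg G + 1) :=
  calc bernoulliProb p (i ∈ ZSet G ·)
      ≤ bernoulliProb p (Disjoint · (insert i (N2 G i))) :=
        bernoulliProb_mono hp₀ hp₁ fun _ => disjoint_insert_N2_of_mem_ZSet G
    _ ≤ (1 - p) ^ (minHopDeg G + 1) := by
        rw [bernoulliProb_disjoint, card_insert_N2]
        exact pow_le_pow_of_le_one (by linarith) (by linarith)
          (by have := minHopDeg_le_hopDeg G i; omega)

lemma bernoulliProb_mem_YSet_le (hp₀ : 0 ≤ p) (hp₁ : p ≤ 1) {i j : Fin n} (hij : G.Adj i j) :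
    bernoulliProb p (i ∈ YSet G ·) ≤ p + (1 - p) ^ (minHopDeg G + 1) :=
  calc bernoulliProb p (i ∈ YSet G ·)
      ≤ bernoulliProb p (fun X => j ∈ X ∨ j ∈ ZSet G X) :=
        bernoulliProb_mono hp₀ hp₁ fun _ => mem_or_mem_ZSet_of_mem_YSet G hij
    _ ≤ p + (1 - p) ^ (minHopDeg G + 1) := by
        grw [bernoulliProb_or_le hp₀ hp₁, bernoulliProb_mem, bernoulliProb_mem_ZSet_le G hp₀ hp₁]

lemma bernoulliProb_mem_DSet_le (hp₀ : 0 ≤ p) (hp₁ : p ≤ 1) (h : 1 ≤ minHopDeg G)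
    (i : Fin n) : bernoulliProb p (i ∈ DSet G ·) ≤ 2 * (p + (1 - p) ^ (minHopDeg G + 1)) := by
  obtain ⟨j, hij⟩ := exists_adj_of_one_le_minHopDeg G h i
  have hunion : ∀ X, i ∈ DSet G X → (i ∈ X ∨ i ∈ ZSet G X) ∨ i ∈ YSet G X := by
    simp [DSet, or_assoc]
  grw [bernoulliProb_mono hp₀ hp₁ hunion, bernoulliProb_or_le hp₀ hp₁,
    bernoulliProb_or_le hp₀ hp₁, bernoulliProb_mem, bernoulliProb_mem_ZSet_le G hp₀ hp₁,
    bernoulliProb_mem_YSet_le G hp₀ hp₁ hij]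
  linarith

theorem rhDomNum_le_of_one_le_minHopDeg (hp₀ : 0 ≤ p) (hp₁ : p ≤ 1) (h : 1 ≤ minHopDeg G) :
    (rhDomNum G : ℝ) ≤ 2 * n * (p + (1 - p) ^ (minHopDeg G + 1)) :=
  calc (rhDomNum G : ℝ) ≤ ∑ i, bernoulliProb p (i ∈ DSet G ·) :=
        cast_le_sum_bernoulliProb_mem hp₀ hp₁ (DSet G) fun X =>
          rhDomNum_le_card G (isRestrainedHopDomSet_DSet G X)
    _ ≤ ∑ _i : Fin n, 2 * (p + (1 - p) ^ (minHopDeg G + 1)) :=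
        sum_le_sum fun i _ => bernoulliProb_mem_DSet_le G hp₀ hp₁ h i
    _ = 2 * n * (p + (1 - p) ^ (minHopDeg G + 1)) := by simp; ring

end RandomRestrainedHopDomSet

theorem stmt9 {n : ℕ} (G : SimpleGraph (Fin n)) (hδh : 1 ≤ minHopDeg G) :
    (rhDomNum G : ℝ) ≤
      2 * n * (Real.log (minHopDeg G + 1) + 1) / (minHopDeg G + 1) := by
  set k := minHopDeg G + 1 with hk
  have hk₀ : (0 : ℝ) < k := by positivity
  have hp₀ : 0 ≤ Real.log k / k := div_nonneg (Real.log_natCast_nonneg k) hk₀.le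
  have hp₁ : Real.log k / k ≤ 1 := (div_le_one hk₀).2 (Real.log_le_self hk₀.le)
  have hkcast : ((minHopDeg G : ℕ) : ℝ) + 1 = k := by push_cast [hk]; rfl
  rw [hkcast]
  calc (rhDomNum G : ℝ) ≤ 2 * n * (Real.log k / k + (1 - Real.log k / k) ^ k) :=
        rhDomNum_le_of_one_le_minHopDeg G hp₀ hp₁ hδh
    _ ≤ 2 * n * (Real.log k / k + (k : ℝ)⁻¹) := by
        grw [one_sub_log_div_pow_le_inv (by omega : 0 < k)]
    _ = 2 * n * (Real.log k + 1) / k := by field_simp
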